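/- Let Q ∈ F_q[X0,X1,X2] be a homogeneous factor of C of degree at least 2 that is irreducible over the algebraic closure of F_q. Then Q does not divide Φ_q(C) = X0^q·∂C/∂X0 + X1^q·∂C/∂X1 + X2^q·∂C/∂X2; equivalently (writing X3 = e0·X0 + e1·X1 + e2·X2), Q does not divide X0^{3d} + X1^{3d} + X2^{3d} + X3^{3d}. -/

import Mathlib

/-!
Write `x, y, z, w` for `X0^d, X1^d, X2^d, X3^d`, so that `C = x + y + z + w`. Since `C` divides
`(x + y + z)^3 + w^3 = x^3 + y^3 + z^3 + w^3 + 3(x + y)(y + z)(x + z)`, a common factor of `C`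
and `x^3 + y^3 + z^3 + w^3` divides `3(x + y)(y + z)(x + z)`. Over an algebraically closed field
each `Xi^d + Xj^d` is a product of linear forms, so an absolutely irreducible factor of degree
at least `2` cannot divide it. Finally `X3^q = e0·X0^q + e1·X1^q + e2·X2^q` (Frobenius), which
gives `Φ_q(C) = d·X0^{3d} + ⋯ + d·X3^{3d}` with `d ≠ 0` in `F_q` because `q = 2d + 1`.
-/

open MvPolynomial

/-- The polynomial `C = X0^d + X1^d + X2^d + (e0·X0 + e1·X1 + e2·X2)^d` over `F_q`. -/
noncomputable def fermatSlice (F : Type) [Field F] (d : ℕ) (e0 e1 e2 : F) :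
    MvPolynomial (Fin 3) F :=
  X 0 ^ d + X 1 ^ d + X 2 ^ d +
    (MvPolynomial.C e0 * X 0 + MvPolynomial.C e1 * X 1 + MvPolynomial.C e2 * X 2) ^ d

/-- `Φ_q(Q) = X0^q·∂Q/∂X0 + X1^q·∂Q/∂X1 + X2^q·∂Q/∂X2`. -/
noncomputable def Phi (F : Type) [Field F] (q : ℕ) (Q : MvPolynomial (Fin 3) F) :
    MvPolynomial (Fin 3) F :=
  X 0 ^ q * MvPolynomial.pderiv 0 Q + X 1 ^ q * MvPolynomial.pderiv 1 Q +
    X 2 ^ q * MvPolynomial.pderiv 2 Q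

theorem pow_add_pow_eq_prod_roots {K L : Type*} [Field K] [IsAlgClosed K] [Field L]
    (g : K →+* L) {d : ℕ} (hd : 0 < d) (u v : L) :
    u ^ d + v ^ d =
      ((Polynomial.X ^ d + Polynomial.C 1 : Polynomial K).roots.map fun r => u - g r * v).prod := by
  set f : Polynomial K := Polynomial.X ^ d + Polynomial.C 1
  have hmonic : f.Monic := Polynomial.monic_X_pow_add (by simpa using hd)
  have hsplit : f.Splits := IsAlgClosed.splits f
  have hcard : Multiset.card f.roots = d := by
    rw [← hsplit.natDegree_eq_card_roots, Polynomial.natDegree_X_pow_add_C]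
  rcases eq_or_ne v 0 with rfl | hv
  · simp [hcard, hd.ne']
  have hfactor : (u / v) ^ d + 1 = (f.roots.map fun r => u / v - g r).prod := by
    convert congrArg (Polynomial.eval₂ g (u / v)) (hsplit.eq_prod_roots_of_monic hmonic) using 1
    · simp [f]
    · simp [Polynomial.eval₂_multiset_prod]
  calc u ^ d + v ^ d = v ^ d * ((u / v) ^ d + 1) := by
        rw [div_pow, mul_add, mul_div_cancel₀ _ (pow_ne_zero d hv), mul_one, add_comm]
    _ = v ^ d * (f.roots.map fun r => u / v - g r).prod := by rw [hfactor]
    _ = (f.roots.map fun r => v * (u / v - g r)).prod := by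
      rw [Multiset.prod_map_mul, Multiset.map_const', Multiset.prod_replicate, hcard]
    _ = (f.roots.map fun r => u - g r * v).prod := by
      congr 1; refine Multiset.map_congr rfl fun r _ => ?_; field_simp

namespace MvPolynomial

variable {σ : Type*}

theorem totalDegree_map_of_injective {R S : Type*} [CommSemiring R] [CommSemiring S]
    {f : R →+* S} (hf : Function.Injective f) (p : MvPolynomial σ R) :
    (map f p).totalDegree = p.totalDegree := by
  simp only [totalDegree, support_map_of_injective p hf]

theorem expand_card {K : Type*} [Field K] [Fintype K] (f : MvPolynomial σ K) :
    expand (Fintype.card K) f = f ^ Fintype.card K := by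
  obtain ⟨p, hp⟩ := CharP.exists K
  obtain ⟨⟨n, _⟩, hp, hn⟩ := FiniteField.card K p
  have : Fact p.Prime := ⟨hp⟩
  rw [hn, ← map_iterateFrobenius_expand, iterateFrobenius_eq_pow,
    FiniteField.frobenius_pow hn, RingHom.one_def, map_id]

section IsAlgClosed

variable {K : Type*} [Field K] [IsAlgClosed K]

theorem X_pow_add_X_pow_eq_prod_roots {d : ℕ} (hd : 0 < d) (i j : σ) :
    (X i ^ d + X j ^ d : MvPolynomial σ K) =
      ((Polynomial.X ^ d + Polynomial.C 1 : Polynomial K).roots.map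
        fun r => X i - C r * X j).prod := by
  apply IsFractionRing.injective (MvPolynomial σ K) (FractionRing (MvPolynomial σ K))
  simp only [map_add, map_pow, map_multiset_prod, Multiset.map_map, Function.comp_def, map_sub,
    map_mul]
  exact pow_add_pow_eq_prod_roots ((algebraMap _ _).comp C) hd _ _

theorem totalDegree_le_one_of_prime_dvd_X_pow_add_X_pow {d : ℕ} (hd : 0 < d) {i j : σ}
    (hij : i ≠ j) {P : MvPolynomial σ K} (hP : Prime P) (hdvd : P ∣ X i ^ d + X j ^ d) :
    P.totalDegree ≤ 1 := by
  rw [X_pow_add_X_pow_eq_prod_roots hd] at hdvd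
  obtain ⟨l, hmem, hPl⟩ := hP.exists_mem_multiset_dvd hdvd
  obtain ⟨r, -, rfl⟩ := Multiset.mem_map.mp hmem
  have hne : (X i - C r * X j : MvPolynomial σ K) ≠ 0 := by
    intro h0
    classical
    simpa [coeff_X, Finsupp.single_left_inj one_ne_zero, hij.symm] using
      congrArg (coeff (Finsupp.single i 1)) h0
  calc P.totalDegree ≤ (X i - C r * X j).totalDegree := totalDegree_le_of_dvd_of_isDomain hPl hne
    _ ≤ 1 := (totalDegree_sub _ _).trans <| max_le (totalDegree_X i).le <|
        (totalDegree_mul _ _).trans (by simp)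

end IsAlgClosed

end MvPolynomial

theorem dvd_sum_cubes_add_three_mul {R : Type*} [CommRing R] (x y z w : R) :
    x + y + z + w ∣ x ^ 3 + y ^ 3 + z ^ 3 + w ^ 3 + 3 * ((x + y) * (y + z) * (x + z)) :=
  ⟨(x + y + z) ^ 2 - (x + y + z) * w + w ^ 2, by ring⟩

theorem Phi_card_fermatSlice {F : Type} [Field F] [Fintype F] (d : ℕ) (e0 e1 e2 : F) :
    Phi F (Fintype.card F) (fermatSlice F d e0 e1 e2) =
      C (d : F) * fermatSlice F (Fintype.card F + (d - 1)) e0 e1 e2 := by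
  have hfrob : (C e0 * X 0 + C e1 * X 1 + C e2 * X 2 : MvPolynomial (Fin 3) F) ^ Fintype.card F =
      C e0 * X 0 ^ Fintype.card F + C e1 * X 1 ^ Fintype.card F +
        C e2 * X 2 ^ Fintype.card F := by
    rw [← expand_card]
    simp
  simp only [Phi, fermatSlice, map_add, pderiv_pow, pderiv_X, pderiv_C_mul, Pi.single_apply]
  simp only [Fin.reduceEq, if_true, if_false, mul_one, mul_zero, add_zero, zero_add]
  rw [map_natCast, pow_add, pow_add, pow_add, pow_add, hfrob]
  ring

theorem not_dvd_fermatSlice_three_mul {F : Type} {K : Type*} [Field F] [Field K] [IsAlgClosed K]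
    [Algebra F K] (h3 : (3 : F) ≠ 0) {d : ℕ} (hd : 0 < d) {e0 e1 e2 : F}
    {Q : MvPolynomial (Fin 3) F} (hQdeg : 2 ≤ Q.totalDegree)
    (hQ : Irreducible (map (algebraMap F K) Q)) (hQC : Q ∣ fermatSlice F d e0 e1 e2) :
    ¬ Q ∣ fermatSlice F (3 * d) e0 e1 e2 := by
  intro hQS
  have hQ3 : Q ∣ 3 * ((X 0 ^ d + X 1 ^ d) * (X 1 ^ d + X 2 ^ d) * (X 0 ^ d + X 2 ^ d)) := by
    simp only [fermatSlice, pow_mul'] at hQS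
    exact (dvd_add_right hQS).mp (hQC.trans (dvd_sum_cubes_add_three_mul _ _ _ _))
  have h3unit : IsUnit (3 : MvPolynomial (Fin 3) F) := by
    rw [← map_ofNat C 3]
    exact h3.isUnit.map C
  have hQ' : Prime (map (algebraMap F K) Q) := hQ.prime
  have hQ'dvd := map_dvd (map (algebraMap F K)) (h3unit.dvd_mul_left.mp hQ3)
  simp only [map_mul, map_add, map_pow, map_X] at hQ'dvd
  have hdeg : (map (algebraMap F K) Q).totalDegree ≤ 1 := by
    rcases hQ'.dvd_or_dvd hQ'dvd with h | h
    · rcases hQ'.dvd_or_dvd h with h | h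
      all_goals exact totalDegree_le_one_of_prime_dvd_X_pow_add_X_pow hd (by decide) hQ' h
    · exact totalDegree_le_one_of_prime_dvd_X_pow_add_X_pow hd (by decide) hQ' h
  rw [totalDegree_map_of_injective (algebraMap F K).injective] at hdeg
  omega

theorem statement11_general (p h : ℕ) (hp : Nat.Prime p) (hp3 : 3 < p)
    (F : Type) [Field F] [Fintype F] (hcard : Fintype.card F = p ^ h)
    (d : ℕ) (hd : p ^ h = 2 * d + 1) (e0 e1 e2 : F)
    (Q : MvPolynomial (Fin 3) F)
    (hQdeg : 2 ≤ Q.totalDegree)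
    (hQabs : Irreducible (MvPolynomial.map (algebraMap F (AlgebraicClosure F)) Q))
    (hQdvd : Q ∣ fermatSlice F d e0 e1 e2) :
    ¬ Q ∣ Phi F (p ^ h) (fermatSlice F d e0 e1 e2) ∧
    ¬ Q ∣ (X 0 ^ (3 * d) + X 1 ^ (3 * d) + X 2 ^ (3 * d) +
      (MvPolynomial.C e0 * X 0 + MvPolynomial.C e1 * X 1 +
        MvPolynomial.C e2 * X 2) ^ (3 * d)) := by
  have hcard0 : ((p ^ h : ℕ) : F) = 0 := hcard ▸ FiniteField.cast_card_eq_zero F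
  have hdF : (d : F) ≠ 0 := by
    intro hd0
    simp [hd, hd0] at hcard0
  have hd0 : 0 < d := Nat.pos_of_ne_zero fun h0 => hdF (by simp [h0])
  have h3 : (3 : F) ≠ 0 := by
    intro h30
    have hcop : Nat.Coprime (p ^ h) 3 :=
      ((Nat.coprime_primes hp Nat.prime_three).mpr hp3.ne').pow_left h
    exact CharP.ringChar_ne_one (Nat.eq_one_of_dvd_coprimes hcop (ringChar.dvd hcard0)
      (ringChar.dvd (by exact_mod_cast h30)))
  have hS : ¬ Q ∣ fermatSlice F (3 * d) e0 e1 e2 :=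
    not_dvd_fermatSlice_three_mul h3 hd0 hQdeg hQabs hQdvd
  refine ⟨?_, hS⟩
  rwa [← hcard, Phi_card_fermatSlice, hcard, show p ^ h + (d - 1) = 3 * d by omega,
    (isUnit_iff_ne_zero.mpr hdF).map C |>.dvd_mul_left]

/-- If `Q` is a homogeneous factor of `C` of degree at least `2` that is
irreducible over the algebraic closure of `F_q`, then `Q` does not divide `Φ_q(C)`;
equivalently (writing `X3 = e0·X0 + e1·X1 + e2·X2`), `Q` does not divide
`X0^{3d} + X1^{3d} + X2^{3d} + X3^{3d}`. -/
theorem statement11 (p h : ℕ) (hp : Nat.Prime p) (hp3 : 3 < p) (hh : 0 < h)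
    (F : Type) [Field F] [Fintype F] (hcard : Fintype.card F = p ^ h)
    (d : ℕ) (hd : p ^ h = 2 * d + 1) (e0 e1 e2 : F)
    (Q : MvPolynomial (Fin 3) F) (m : ℕ) (hQhom : Q.IsHomogeneous m)
    (hQdeg : 2 ≤ Q.totalDegree)
    (hQabs : Irreducible (MvPolynomial.map (algebraMap F (AlgebraicClosure F)) Q))
    (hQdvd : Q ∣ fermatSlice F d e0 e1 e2) :
    ¬ Q ∣ Phi F (p ^ h) (fermatSlice F d e0 e1 e2) ∧
    ¬ Q ∣ (X 0 ^ (3 * d) + X 1 ^ (3 * d) + X 2 ^ (3 * d) +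
      (MvPolynomial.C e0 * X 0 + MvPolynomial.C e1 * X 1 +
        MvPolynomial.C e2 * X 2) ^ (3 * d)) :=
  statement11_general p h hp hp3 F hcard d hd e0 e1 e2 Q hQdeg hQabs hQdvd
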